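/- From singular to stopwatch, backward simulation: Let G_S be an initialized singular game and let G_W be the stopwatch game obtained from G_S by the flow-normalization construction. Then the inverse map γ1⁻¹ : Q(G_W) → Q(G_S), γ1⁻¹(l,v*) = (l,v) where v(x) = v*(x)·flow(l,x) if flow(l,x) ≠ 0 and v(x) = v*(x) otherwise, is an alternating simulation witnessing T(G_W) ≼ T(G_S). -/

import Mathlib

/-!
Turn-based game structures, alternating simulation, and related notions,
following Dima, Hammami, Oualhadj, Laleau,
"Deciding the synthesis problem for hybrid games through bisimulation".
-/

/-- A turn-based game structure over a set of observations `Obs`: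
configurations (partitioned between Player 1 and Player 2 via `isP1`),
an initial Player-1 configuration, moves, a transition relation
(`trans p m p'` holds when the -- partial, possibly nondeterministic --
 transition function is defined on `(p, m)` with value `p'`),
and a labeling of configurations by observations. -/
structure TBGame (Obs : Type) where
  /-- configurations -/
  Conf : Type
  /-- moves -/
  Mv : Type
  /-- the configurations owned by Player 1 (the others belong to Player 2) -/
  isP1 : Conf → Prop
  /-- initial configuration -/
  init : Conf
  /-- the initial configuration belongs to Player 1 -/
  init_p1 : isP1 init
  /-- the transitions -/
  trans : Conf → Mv → Conf → Prop
  /-- labeling of configurations with observations -/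
  lbl : Conf → Obs

/-- `R` is an alternating simulation between `G1` and `G2`:
it relates only same-player configurations, preserves labels,
every Player-1 transition of `G1` from `p` is matched by some transition
of `G2` from `q` staying in `R`, and every Player-2 transition of `G2`
from `q` is matched by some transition of `G1` from `p` staying in `R`. -/
def IsAltSim {Obs : Type} (G1 G2 : TBGame Obs) (R : G1.Conf → G2.Conf → Prop) : Prop :=
  (∀ p q, R p q → G1.lbl p = G2.lbl q) ∧
  (∀ p q, R p q → (G1.isP1 p ↔ G2.isP1 q)) ∧
  (∀ p q, R p q → G1.isP1 p →
      ∀ m p', G1.trans p m p' → ∃ m' q', G2.trans q m' q' ∧ R p' q') ∧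
  (∀ p q, R p q → ¬ G1.isP1 p →
      ∀ m' q', G2.trans q m' q' → ∃ m p', G1.trans p m p' ∧ R p' q')

/-- `R` witnesses `T(G1) ≼ T(G2)` : `R` is an alternating simulation
containing the pair of initial configurations. -/
def Simulates {Obs : Type} (G1 G2 : TBGame Obs) (R : G1.Conf → G2.Conf → Prop) : Prop :=
  IsAltSim G1 G2 R ∧ R G1.init G2.init

/-- The data of an edge of a hybrid game: source and target locations, an action,
a simple compact constraint assigning to each variable `x` the compact rational
interval `[lo x, hi x]`, and a reset function `rst : X → ℚ ∪ {⊥}`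
(`none` meaning `⊥`, i.e. no reset). -/
structure EdgeData (L X Act : Type) where
  src : L
  act : Act
  lo : X → ℚ
  hi : X → ℚ
  rst : X → Option ℚ
  tgt : L

/-- An initialized singular game (ISR game): locations partitioned between the
two players, an initial Player-1 location, rational flows (slopes) for each
variable in each location, observations labeling the locations, and a set of
edges, subject to the initialization condition: any variable whose flow changes
across an edge is reset on that edge. -/
structure ISRGame (L X Act Obs : Type) where
  /-- the locations owned by Player 1 (the others belong to Player 2) -/
  isL1 : L → Prop
  /-- initial location -/
  l0 : L
  l0_p1 : isL1 l0
  /-- labeling of locations with observations -/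
  lbl : L → Obs
  /-- the slope of each variable in each location -/
  flow : L → X → ℚ
  /-- the edges -/
  E : Set (EdgeData L X Act)
  /-- initialization: whenever the flow of `x` differs between the two endpoints
  of an edge, `x` is reset on that edge -/
  initialized : ∀ e ∈ E, ∀ x, flow e.src x ≠ flow e.tgt x → e.rst x ≠ none

/-- The semantics `T(G)` of an ISR game `G` as a turn-based game structure:
configurations are pairs (location, valuation of the variables in `ℝ`),
the initial configuration is `(l0, 0)`, moves are pairs (action, nonnegative
delay), and `(l,v) →⁽ᵃ'ᵗ⁾ (l',v')` whenever some edge `e = (l,a,φ_e,rst_e,l')`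
satisfies `v x + t · flow l x ∈ φ_e x` for all `x`, `v' x = rst_e x` when
`rst_e x ≠ ⊥`, and `v' x = v x + t · flow l x` otherwise. -/
def ISRGame.semantics {L X Act Obs : Type} (G : ISRGame L X Act Obs) : TBGame Obs where
  Conf := L × (X → ℝ)
  Mv := Act × NNReal
  isP1 := fun c => G.isL1 c.1
  init := (G.l0, fun _ => 0)
  init_p1 := G.l0_p1
  lbl := fun c => G.lbl c.1
  trans := fun c m c' =>
    ∃ e ∈ G.E, e.src = c.1 ∧ e.act = m.1 ∧ e.tgt = c'.1 ∧
      (∀ x, (e.lo x : ℝ) ≤ c.2 x + (m.2 : ℝ) * (G.flow c.1 x : ℝ) ∧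
            c.2 x + (m.2 : ℝ) * (G.flow c.1 x : ℝ) ≤ (e.hi x : ℝ)) ∧
      (∀ x, c'.2 x =
        (e.rst x).elim (c.2 x + (m.2 : ℝ) * (G.flow c.1 x : ℝ)) (fun r => (r : ℝ)))

/-- The transformation of an edge of an initialized singular game into an edge
of the associated stopwatch game: the constraint of each variable is divided
by the flow of the variable in the source location (when nonzero; the division
of a compact interval by a negative rational swaps its endpoints), and the reset
value of each reset variable is divided by the flow of the variable in the
target location (when nonzero). -/
def stopwatchEdge {L X Act Obs : Type} (G : ISRGame L X Act Obs)
    (e : EdgeData L X Act) : EdgeData L X Act where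
  src := e.src
  act := e.act
  lo := fun x =>
    if G.flow e.src x = 0 then e.lo x
    else if 0 < G.flow e.src x then e.lo x / G.flow e.src x
    else e.hi x / G.flow e.src x
  hi := fun x =>
    if G.flow e.src x = 0 then e.hi x
    else if 0 < G.flow e.src x then e.hi x / G.flow e.src x
    else e.lo x / G.flow e.src x
  rst := fun x =>
    (e.rst x).map (fun c => if G.flow e.tgt x = 0 then c else c / G.flow e.tgt x)
  tgt := e.tgt

/-- The initialized stopwatch game `G_W` obtained from an initialized singular
game `G_S` by flow normalization: the flow of each variable becomes `0` if it
was `0` and `1` otherwise, and constraints and resets are rescaled accordingly. -/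
def stopwatchOf {L X Act Obs : Type} (G : ISRGame L X Act Obs) : ISRGame L X Act Obs where
  isL1 := G.isL1
  l0 := G.l0
  l0_p1 := G.l0_p1
  lbl := G.lbl
  flow := fun l x => if G.flow l x = 0 then 0 else 1
  E := stopwatchEdge G '' G.E
  initialized := by
    rintro e ⟨e0, he0, rfl⟩ x hx
    have hne : G.flow e0.src x ≠ G.flow e0.tgt x := by
      intro h
      exact hx (congrArg (fun q : ℚ => if q = 0 then (0 : ℚ) else 1) h)
    have h0 := G.initialized e0 he0 x hne
    simp only [stopwatchEdge]
    cases hr : e0.rst x with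
    | none => exact absurd hr h0
    | some c => simp [hr]

/-- `stopwatchOf G` is indeed a stopwatch game : all flows are `0` or `1`. -/
theorem stopwatchOf_flow {L X Act Obs : Type} (G : ISRGame L X Act Obs) (l : L) (x : X) :
    (stopwatchOf G).flow l x = 0 ∨ (stopwatchOf G).flow l x = 1 := by
  by_cases h : G.flow l x = 0 <;> simp [stopwatchOf, h]

/-- The transformed valuation `v*` : `v* x = v x / flow l x` when `flow l x ≠ 0`,
and `v* x = v x` otherwise. -/
noncomputable def vstar {L X : Type} (flow : L → X → ℚ) (l : L) (v : X → ℝ) : X → ℝ :=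
  fun x => if flow l x = 0 then v x else v x / (flow l x : ℝ)

/-- The relation (graph of the map) `γ1 (l,v) = (l, v*)` between configurations
of `T(G_S)` and configurations of `T(G_W)`. -/
def gamma1 {L X Act Obs : Type} (G : ISRGame L X Act Obs) :
    (ISRGame.semantics G).Conf → (ISRGame.semantics (stopwatchOf G)).Conf → Prop :=
  fun p q => q.1 = p.1 ∧ q.2 = vstar G.flow p.1 p.2

/-- The inverse map `γ1⁻¹ (l, v*) = (l, v)`, where `v x = v* x · flow l x` if
`flow l x ≠ 0` and `v x = v* x` otherwise, as a relation between configurations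
of `T(G_W)` and configurations of `T(G_S)`. -/
def gamma1inv {L X Act Obs : Type} (G : ISRGame L X Act Obs) :
    (ISRGame.semantics (stopwatchOf G)).Conf → (ISRGame.semantics G).Conf → Prop :=
  fun q p => p.1 = q.1 ∧
    p.2 = fun x => if G.flow q.1 x = 0 then q.2 x else q.2 x * (G.flow q.1 x : ℝ)

/-!
The map `γ1⁻¹` multiplies each coordinate of a stopwatch valuation by the (nonzero) slope of
its variable in the current location. Along a delay `t`, a coordinate growing at rate `1` in
`G_W` is thus sent to one growing at rate `flow l x` in `G_S`; multiplying the rescaled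
constraint `φ_e(x) / flow l x` back by `flow l x` recovers `φ_e(x)`, and likewise for resets.
Variables that are not reset keep their slope by initialization, so they are rescaled by the
same factor before and after the jump. Hence a transition `(l, v*) → (l', v'*)` of `T(G_W)`
exists exactly when `γ1⁻¹(l, v*) → γ1⁻¹(l', v'*)` is a transition of `T(G_S)` with the same
move, and since `γ1⁻¹` is onto (with inverse `γ1`), both players' moves can be matched.
-/

noncomputable def flowScale (c : ℚ) (r : ℝ) : ℝ :=
  if c = 0 then r else r * c

noncomputable def scaleValuation {L X : Type} (flow : L → X → ℚ) (l : L) (w : X → ℝ) :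
    X → ℝ :=
  fun x => flowScale (flow l x) (w x)

theorem flowScale_injective (c : ℚ) : Function.Injective (flowScale c) := by
  intro a b h
  by_cases hc : c = 0
  · simpa [flowScale, hc] using h
  · have hc' : (c : ℝ) ≠ 0 := by exact_mod_cast hc
    simpa [flowScale, hc, hc'] using h

theorem flowScale_add_mul_normalized (c : ℚ) (r t : ℝ) :
    flowScale c (r + t * ((if c = 0 then 0 else 1 : ℚ) : ℝ)) = flowScale c r + t * c := by
  by_cases hc : c = 0 <;> simp [flowScale, hc, add_mul]

theorem flowScale_normalized_reset (c r : ℚ) :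
    flowScale c ((if c = 0 then r else r / c : ℚ) : ℝ) = r := by
  by_cases hc : c = 0
  · simp [flowScale, hc]
  · have hc' : (c : ℝ) ≠ 0 := by exact_mod_cast hc
    simp [flowScale, hc, div_mul_cancel₀ _ hc']

theorem mem_normalized_interval_iff (c lo hi : ℚ) (y : ℝ) :
    ((if c = 0 then lo else if 0 < c then lo / c else hi / c : ℚ) : ℝ) ≤ y ∧
        y ≤ ((if c = 0 then hi else if 0 < c then hi / c else lo / c : ℚ) : ℝ) ↔
      (lo : ℝ) ≤ flowScale c y ∧ flowScale c y ≤ hi := by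
  rcases lt_trichotomy c 0 with hc | rfl | hc
  · have hc' : (c : ℝ) < 0 := by exact_mod_cast hc
    simp only [flowScale, hc.ne, hc.not_gt, if_false]
    push_cast
    rw [div_le_iff_of_neg hc', le_div_iff_of_neg hc', and_comm]
  · simp [flowScale]
  · have hc' : (0 : ℝ) < c := by exact_mod_cast hc
    simp only [flowScale, hc.ne', hc, if_false, if_true]
    push_cast
    rw [div_le_iff₀ hc', le_div_iff₀ hc']

theorem scaleValuation_vstar {L X : Type} (flow : L → X → ℚ) (l : L) (v : X → ℝ) :
    scaleValuation flow l (vstar flow l v) = v := by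
  funext x
  by_cases hc : flow l x = 0
  · simp [scaleValuation, vstar, flowScale, hc]
  · have hc' : (flow l x : ℝ) ≠ 0 := by exact_mod_cast hc
    simp [scaleValuation, vstar, flowScale, hc, div_mul_cancel₀ _ hc']

theorem scaleValuation_zero {L X : Type} (flow : L → X → ℚ) (l : L) :
    scaleValuation flow l (fun _ => 0) = fun _ => 0 := by
  funext x
  simp [scaleValuation, flowScale]

section StopwatchEdge

variable {L X Act Obs : Type} (G : ISRGame L X Act Obs)

theorem stopwatchEdge_guard_iff (e : EdgeData L X Act) (x : X) (w t : ℝ) :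
    ((stopwatchEdge G e).lo x : ℝ) ≤ w + t * ((stopwatchOf G).flow e.src x : ℝ) ∧
        w + t * ((stopwatchOf G).flow e.src x : ℝ) ≤ ((stopwatchEdge G e).hi x : ℝ) ↔
      (e.lo x : ℝ) ≤ flowScale (G.flow e.src x) w + t * G.flow e.src x ∧
        flowScale (G.flow e.src x) w + t * G.flow e.src x ≤ (e.hi x : ℝ) := by
  rw [← flowScale_add_mul_normalized]
  exact mem_normalized_interval_iff _ _ _ _

theorem flowScale_stopwatchEdge_reset {e : EdgeData L X Act} (he : e ∈ G.E) (x : X)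
    (w t : ℝ) :
    flowScale (G.flow e.tgt x)
        (((stopwatchEdge G e).rst x).elim (w + t * ((stopwatchOf G).flow e.src x : ℝ))
          (fun r => (r : ℝ))) =
      (e.rst x).elim (flowScale (G.flow e.src x) w + t * G.flow e.src x)
        (fun r => (r : ℝ)) := by
  cases hr : e.rst x with
  | none =>
    have hflow : G.flow e.src x = G.flow e.tgt x :=
      not_not.mp fun h => G.initialized e he x h hr
    simp only [stopwatchEdge, hr, Option.map_none, Option.elim]
    rw [← hflow]
    exact flowScale_add_mul_normalized _ _ _
  | some r =>
    simp only [stopwatchEdge, hr, Option.map_some, Option.elim]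
    exact flowScale_normalized_reset _ _

theorem stopwatchOf_trans_iff (l l' : L) (w w' : X → ℝ) (m : Act × NNReal) :
    (stopwatchOf G).semantics.trans (l, w) m (l', w') ↔
      G.semantics.trans (l, scaleValuation G.flow l w) m (l', scaleValuation G.flow l' w') := by
  show (∃ eW ∈ stopwatchEdge G '' G.E, _) ↔ ∃ e ∈ G.E, _
  rw [Set.exists_mem_image]
  refine exists_congr fun e => and_congr_right fun he => and_congr_right fun hsrc => and_congr_right fun _ =>
    and_congr_right fun htgt => ?_
  obtain rfl : e.src = l := hsrc
  obtain rfl : e.tgt = l' := htgt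
  refine and_congr (forall_congr' fun x => stopwatchEdge_guard_iff G e x (w x) m.2)
    (forall_congr' fun x => ?_)
  rw [← (flowScale_injective (G.flow e.tgt x)).eq_iff, flowScale_stopwatchEdge_reset G he]
  rfl

end StopwatchEdge

theorem gamma1inv_iff {L X Act Obs : Type} (G : ISRGame L X Act Obs)
    (q : (stopwatchOf G).semantics.Conf) (p : G.semantics.Conf) :
    gamma1inv G q p ↔ p = (q.1, scaleValuation G.flow q.1 q.2) :=
  ⟨fun ⟨h1, h2⟩ => Prod.ext h1 h2, fun h => h ▸ ⟨rfl, rfl⟩⟩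

theorem singular_to_stopwatch_backward_general {L X Act Obs : Type}
    (G : ISRGame L X Act Obs) :
    Simulates (ISRGame.semantics (stopwatchOf G)) (ISRGame.semantics G) (gamma1inv G) := by
  simp only [Simulates, IsAltSim, gamma1inv_iff]
  refine ⟨⟨?_, ?_, ?_, ?_⟩, ?_⟩
  · rintro q p rfl
    rfl
  · rintro q p rfl
    rfl
  · rintro q p rfl - m q' hq'
    exact ⟨m, _, (stopwatchOf_trans_iff G _ _ _ _ m).mp hq', rfl⟩
  · rintro ⟨l, w⟩ p rfl - m ⟨l', v'⟩ hp'
    refine ⟨m, (l', vstar G.flow l' v'), (stopwatchOf_trans_iff G _ _ _ _ m).mpr ?_, ?_⟩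
    · rwa [scaleValuation_vstar]
    · rw [scaleValuation_vstar]
  · exact congrArg _ (scaleValuation_zero G.flow G.l0).symm

/-- **From singular to stopwatch, backward simulation.** For every initialized
singular game `G_S` with associated stopwatch game `G_W`, the inverse map
`γ1⁻¹ (l, v*) = (l, v)`, where `v x = v* x · flow l x` if `flow l x ≠ 0` and
`v x = v* x` otherwise, is an alternating simulation witnessing
`T(G_W) ≼ T(G_S)`. -/
theorem singular_to_stopwatch_backward {L X Act Obs : Type}
    [Fintype L] [Fintype X] [Fintype Act] [Fintype Obs]
    (G : ISRGame L X Act Obs) (hE : G.E.Finite) :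
    Simulates (ISRGame.semantics (stopwatchOf G)) (ISRGame.semantics G) (gamma1inv G) :=
  singular_to_stopwatch_backward_general G
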